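/- arXiv:2407.11759 — 2 statements merged into one kernel-verified Lean document; each statement's English description precedes it below -/
import Mathlib

section
/- A seminorm x on ℚ^n obtained by homogeneous extension of an integer-valued, ℤ-homogeneous, subadditive function on ℤ^n extends uniquely to a continuous seminorm on ℝ^n. -/
/-! Expanding in the standard basis bounds a `ℚ`-seminorm on `ℚ^n` by a multiple of the sup norm,
so it is Lipschitz and extends uniquely to a continuous function on the completion `ℝ^n`.
Homogeneity and subadditivity are closed conditions, so they pass from the dense subset `ℚ^n` to
`ℝ^n`; for homogeneity one first extends in the vector with the rational scalar fixed, and then in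
the scalar. -/

namespace Seminorm

def ofRatValued {M : Type*} [AddCommGroup M] [Module ℚ M] (x : M → ℚ)
    (hhom : ∀ (q : ℚ) (v : M), x (q • v) = |q| * x v) (hsub : ∀ u v : M, x (u + v) ≤ x u + x v) :
    Seminorm ℚ M :=
  Seminorm.of (fun v => (x v : ℝ)) (fun u v => by exact_mod_cast hsub u v) fun q v => by
    rw [hhom, Rat.cast_mul, Rat.cast_abs, ← Rat.norm_cast_real, Real.norm_eq_abs]

theorem le_sum_single_mul_norm {𝕜 ι : Type*} [NormedField 𝕜] [Fintype ι] [DecidableEq ι]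
    (p : Seminorm 𝕜 (ι → 𝕜)) (v : ι → 𝕜) :
    p v ≤ (∑ i, p (Pi.single i 1)) * ‖v‖ :=
  calc p v = p (∑ i, v i • Pi.single i 1) := by rw [← pi_eq_sum_univ']
    _ ≤ ∑ i, p (v i • Pi.single i 1) :=
      Finset.le_sum_of_subadditive p (map_zero p).le (map_add_le_add p) _ _
    _ = ∑ i, ‖v i‖ * p (Pi.single i 1) := by simp only [map_smul_eq_mul]
    _ ≤ ∑ i, ‖v‖ * p (Pi.single i 1) := by gcongr with i; exact norm_le_pi_norm v i
    _ = (∑ i, p (Pi.single i 1)) * ‖v‖ := by rw [← Finset.mul_sum, mul_comm]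

theorem lipschitzWith_of_le_mul_norm {𝕜 E : Type*} [SeminormedRing 𝕜] [SeminormedAddCommGroup E]
    [SMul 𝕜 E] (p : Seminorm 𝕜 E) {C : NNReal} (hp : ∀ v, p v ≤ C * ‖v‖) : LipschitzWith C p :=
  LipschitzWith.of_dist_le_mul fun u v => by
    rw [dist_eq_norm, dist_eq_norm]
    exact (abs_sub_map_le_sub p u v).trans (hp _)

theorem uniformContinuous_pi {𝕜 ι : Type*} [NormedField 𝕜] [Fintype ι]
    (p : Seminorm 𝕜 (ι → 𝕜)) : UniformContinuous p := by
  classical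
  refine (p.lipschitzWith_of_le_mul_norm (C := (∑ i, p (Pi.single i 1)).toNNReal) fun v => ?_)
    |>.uniformContinuous
  rw [Real.coe_toNNReal _ (Finset.sum_nonneg fun i _ => apply_nonneg p _)]
  exact p.le_sum_single_mul_norm v

end Seminorm

section RatCastPi

variable {ι : Type*}

def ratCastPi (v : ι → ℚ) : ι → ℝ := fun i => v i

@[simp]
theorem ratCastPi_add (u v : ι → ℚ) : ratCastPi (u + v) = ratCastPi u + ratCastPi v := by
  funext i; simp [ratCastPi]

@[simp]
theorem ratCastPi_smul (q : ℚ) (v : ι → ℚ) : ratCastPi (q • v) = (q : ℝ) • ratCastPi v := by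
  funext i; simp [ratCastPi]

theorem isometry_ratCastPi [Fintype ι] : Isometry (ratCastPi : (ι → ℚ) → ι → ℝ) :=
  Isometry.piMap _ fun _ => Isometry.of_dist_eq Rat.dist_cast

theorem denseRange_ratCastPi : DenseRange (ratCastPi : (ι → ℚ) → ι → ℝ) := by
  have : Set.range (ratCastPi : (ι → ℚ) → ι → ℝ) = Set.univ.pi fun _ => Set.range ((↑) : ℚ → ℝ) :=
    Set.range_piMap _
  rw [DenseRange, this]
  exact dense_pi _ fun _ _ => Rat.denseRange_cast

theorem exists_continuous_comp_ratCastPi_eq [Fintype ι] {f : (ι → ℚ) → ℝ}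
    (hf : UniformContinuous f) :
    ∃ y : (ι → ℝ) → ℝ, Continuous y ∧ ∀ v, y (ratCastPi v) = f v := by
  have hui := isometry_ratCastPi (ι := ι).isUniformInducing
  exact ⟨_, (uniformContinuous_uniformly_extend hui denseRange_ratCastPi hf).continuous,
    (hui.isDenseInducing denseRange_ratCastPi).extend_eq hf.continuous⟩

variable {y : (ι → ℝ) → ℝ} (hy : Continuous y)
include hy

theorem map_smul_of_ratCastPi
    (hsmul : ∀ (q : ℚ) (v : ι → ℚ), y (ratCastPi (q • v)) = |(q : ℝ)| * y (ratCastPi v))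
    (c : ℝ) (u : ι → ℝ) : y (c • u) = |c| * y u := by
  have hrat (q : ℚ) (u : ι → ℝ) : y ((q : ℝ) • u) = |(q : ℝ)| * y u :=
    denseRange_ratCastPi.induction_on u
      (isClosed_eq (hy.comp (continuous_const_smul _)) (continuous_const.mul hy))
      fun v => by rw [← ratCastPi_smul, hsmul]
  exact Rat.denseRange_cast.induction_on c
    (isClosed_eq (hy.comp (continuous_id.smul continuous_const))
      (continuous_abs.mul continuous_const))
    fun q => hrat q u

theorem map_add_le_of_ratCastPi
    (hadd : ∀ u v : ι → ℚ, y (ratCastPi (u + v)) ≤ y (ratCastPi u) + y (ratCastPi v))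
    (u v : ι → ℝ) : y (u + v) ≤ y u + y v :=
  denseRange_ratCastPi.induction_on₂
    (isClosed_le (hy.comp continuous_add) ((hy.comp continuous_fst).add (hy.comp continuous_snd)))
    (fun u v => by rw [← ratCastPi_add]; exact hadd u v) u v

end RatCastPi

/-- A `ℚ`-homogeneous subadditive function on `ℚ^n` (such as the homogeneous extension of
the integral Thurston norm) extends uniquely to a continuous seminorm on `ℝ^n`. -/
theorem stmt2 (n : ℕ) (x : (Fin n → ℚ) → ℚ)
    (hhom : ∀ (q : ℚ) (v : Fin n → ℚ), x (q • v) = |q| * x v)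
    (hsub : ∀ u v : Fin n → ℚ, x (u + v) ≤ x u + x v) :
    ∃! y : (Fin n → ℝ) → ℝ,
      Continuous y ∧
      (∀ v : Fin n → ℚ, y (fun i => ((v i : ℚ) : ℝ)) = ((x v : ℚ) : ℝ)) ∧
      (∀ (c : ℝ) (u : Fin n → ℝ), y (c • u) = |c| * y u) ∧
      (∀ u v : Fin n → ℝ, y (u + v) ≤ y u + y v) := by
  set p := Seminorm.ofRatValued x hhom hsub
  obtain ⟨y, hy, hyp⟩ := exists_continuous_comp_ratCastPi_eq p.uniformContinuous_pi
  refine ⟨y, ⟨hy, hyp, map_smul_of_ratCastPi hy fun q v => ?_,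
    map_add_le_of_ratCastPi hy fun u v => ?_⟩, fun z ⟨hz, hzp, _⟩ => ?_⟩
  · rw [hyp, hyp, map_smul_eq_mul, ← Rat.norm_cast_real, Real.norm_eq_abs]
  · simpa only [hyp] using map_add_le_add p u v
  · exact hz.ext_on denseRange_ratCastPi hy fun _ ⟨v, hv⟩ => hv ▸ (hzp v).trans (hyp v).symm
end

section
/- Let D be the Farey tessellation: the graph on vertex set ℚ ∪ {∞} (reduced fractions, ∞ = 1/0) with an edge between c/d and e/f iff |cf − de| = 1. Then no embedded cycle of D lies entirely in a subgraph containing at most one edge from each triangle; in particular, a subgraph of the 1-skeleton of the Farey tessellation containing at most one edge from the boundary of every 2-cell is a forest. -/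
/-- Numerator of a vertex of the Farey tessellation, with `∞ = 1/0` encoded as `none`. -/
def fareyNum : Option ℚ → ℤ
  | none => 1
  | some x => x.num

/-- Denominator of a vertex of the Farey tessellation, with `∞ = 1/0` encoded as `none`. -/
def fareyDen : Option ℚ → ℤ
  | none => 0
  | some x => (x.den : ℤ)

/-- The 1-skeleton of the Farey tessellation: vertices are `ℚ ∪ {∞}` (reduced
fractions, `∞ = 1/0`) and `c/d` is joined to `e/f` iff `|cf - de| = 1`. -/
def fareyGraph : SimpleGraph (Option ℚ) where
  Adj u v := u ≠ v ∧ (fareyNum u * fareyDen v - fareyNum v * fareyDen u).natAbs = 1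
  symm := by
    constructor
    intro u v h
    exact ⟨h.1.symm, by omega⟩
  loopless := by
    constructor
    intro u h
    exact h.1 rfl

section Aux

/-- In a cycle, every vertex of the support has two distinct neighbours in the support. -/
lemma farey_two_nbrs {V : Type*} {H : SimpleGraph V} {x v : V} {c : H.Walk x x}
    (hc : c.IsCycle) (hv : v ∈ c.support) :
    ∃ u w, u ≠ w ∧ H.Adj v u ∧ H.Adj v w ∧ u ∈ c.support ∧ w ∈ c.support := by
  classical
  have hc' : (c.rotate v hv).IsCycle := hc.rotate hv
  have hsub : ∀ z, z ∈ (c.rotate v hv).support → z ∈ c.support := by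
    intro z hz
    rw [SimpleGraph.Walk.support_eq_cons (c.rotate v hv), List.mem_cons] at hz
    rcases hz with rfl | hz
    · exact hv
    · rw [SimpleGraph.Walk.support_eq_cons c, List.mem_cons]
      exact Or.inr ((SimpleGraph.Walk.support_rotate c v hv).mem_iff.mp hz)
  have hnil : ¬ (c.rotate v hv).Nil := hc'.not_nil
  rw [SimpleGraph.Walk.not_nil_iff] at hnil
  obtain ⟨u, hadj, p, heq⟩ := hnil
  have h3 := hc'.three_le_length
  rw [heq] at h3
  simp only [SimpleGraph.Walk.length_cons] at h3
  have hrnil : ¬ p.reverse.Nil := by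
    rw [SimpleGraph.Walk.nil_iff_length_eq, SimpleGraph.Walk.length_reverse]
    omega
  rw [SimpleGraph.Walk.not_nil_iff] at hrnil
  obtain ⟨w, hadj', q, heq'⟩ := hrnil
  refine ⟨u, w, ?_, hadj, hadj', ?_, ?_⟩
  · rintro rfl
    have hmem : s(v, u) ∈ p.edges := by
      have h1 : p.edges.reverse = s(v, u) :: q.edges := by
        rw [← SimpleGraph.Walk.edges_reverse, heq', SimpleGraph.Walk.edges_cons]
      have : s(v, u) ∈ p.edges.reverse := by
        rw [h1]; exact List.mem_cons_self
      simpa using this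
    have ht := hc'.edges_nodup
    rw [heq, SimpleGraph.Walk.edges_cons, List.nodup_cons] at ht
    exact ht.1 hmem
  · apply hsub
    rw [heq, SimpleGraph.Walk.support_cons]
    exact List.mem_cons_of_mem _ p.start_mem_support
  · apply hsub
    rw [heq, SimpleGraph.Walk.support_cons]
    apply List.mem_cons_of_mem
    have : w ∈ p.reverse.support := by
      rw [heq', SimpleGraph.Walk.support_cons]
      exact List.mem_cons_of_mem _ q.start_mem_support
    rwa [SimpleGraph.Walk.support_reverse, List.mem_reverse] at this
end Aux

/-- Key integer computation: two solutions of `|P y - x Q| = 1` with positive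
denominators `< Q` are adjacent in the Farey graph. -/
lemma farey_key (P Q A B C D : ℤ) (hB1 : 1 ≤ B) (hD1 : 1 ≤ D) (hBQ : B < Q) (hDQ : D < Q)
    (hne : ¬(A = C ∧ B = D))
    (ha : (P * B - A * Q).natAbs = 1) (hb : (P * D - C * Q).natAbs = 1) :
    (A * D - C * B).natAbs = 1 := by
  have hQ2 : 2 ≤ Q := by omega
  have hea : P * B - A * Q = 1 ∨ P * B - A * Q = -1 := by omega
  have heb : P * D - C * Q = 1 ∨ P * D - C * Q = -1 := by omega
  have key : Q * (A * D - C * B) = (P * D - C * Q) * B - (P * B - A * Q) * D := by ring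
  have hmain : A * D - C * B = 1 ∨ A * D - C * B = -1 := by
    rcases hea with hea | hea <;> rcases heb with heb | heb
    · -- Q * m = B - D, so m = 0 and B = D, contradiction
      exfalso
      have hk : Q * (A * D - C * B) = B - D := by
        linear_combination key + B * heb - D * hea
      have hBD : B = D := by
        rcases lt_trichotomy (A * D - C * B) 0 with h | h | h
        · have h5 : Q * (A * D - C * B) ≤ Q * (-1) :=
            mul_le_mul_of_nonneg_left (by omega) (by omega)
          have h6 : Q * (-1) = -Q := by ring
          omega
        · rw [h, mul_zero] at hk
          omega
        · have h5 : Q * 1 ≤ Q * (A * D - C * B) :=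
            mul_le_mul_of_nonneg_left (by omega) (by omega)
          have h6 : Q * 1 = Q := by ring
          omega
      have hAC : A * Q = C * Q := by linear_combination heb - hea + P * hBD
      exact hne ⟨mul_right_cancel₀ (show Q ≠ 0 by omega) hAC, hBD⟩
    · -- Q * m = -B - D, so m = -1
      right
      have hk : Q * (A * D - C * B) = -B - D := by
        linear_combination key + B * heb - D * hea
      rcases lt_trichotomy (A * D - C * B) (-1) with h | h | h
      · exfalso
        have h5 : Q * (A * D - C * B) ≤ Q * (-2) :=
          mul_le_mul_of_nonneg_left (by omega) (by omega)
        have h6 : Q * (-2) = -(2 * Q) := by ring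
        omega
      · exact h
      · exfalso
        have h5 : Q * 0 ≤ Q * (A * D - C * B) :=
          mul_le_mul_of_nonneg_left (by omega) (by omega)
        have h6 : Q * 0 = 0 := by ring
        omega
    · -- Q * m = B + D, so m = 1
      left
      have hk : Q * (A * D - C * B) = B + D := by
        linear_combination key + B * heb - D * hea
      rcases lt_trichotomy (A * D - C * B) 1 with h | h | h
      · exfalso
        have h5 : Q * (A * D - C * B) ≤ Q * 0 :=
          mul_le_mul_of_nonneg_left (by omega) (by omega)
        have h6 : Q * 0 = 0 := by ring
        omega
      · exact h
      · exfalso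
        have h5 : Q * 2 ≤ Q * (A * D - C * B) :=
          mul_le_mul_of_nonneg_left (by omega) (by omega)
        have h6 : Q * 2 = 2 * Q := by ring
        omega
    · -- Q * m = D - B, so m = 0 and B = D, contradiction
      exfalso
      have hk : Q * (A * D - C * B) = D - B := by
        linear_combination key + B * heb - D * hea
      have hBD : B = D := by
        rcases lt_trichotomy (A * D - C * B) 0 with h | h | h
        · have h5 : Q * (A * D - C * B) ≤ Q * (-1) :=
            mul_le_mul_of_nonneg_left (by omega) (by omega)
          have h6 : Q * (-1) = -Q := by ring
          omega
        · rw [h, mul_zero] at hk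
          omega
        · have h5 : Q * 1 ≤ Q * (A * D - C * B) :=
            mul_le_mul_of_nonneg_left (by omega) (by omega)
          have h6 : Q * 1 = Q := by ring
          omega
      have hAC : A * Q = C * Q := by linear_combination heb - hea + P * hBD
      exact hne ⟨mul_right_cancel₀ (show Q ≠ 0 by omega) hAC, hBD⟩
  omega

/-- The two "parents" of a Farey fraction (its neighbours of smaller denominator)
are adjacent to each other. -/
lemma farey_parents_adj (p a b : ℚ) (hab : a ≠ b)
    (hda : (a.den : ℤ) < (p.den : ℤ)) (hdb : (b.den : ℤ) < (p.den : ℤ))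
    (ha : (p.num * (a.den : ℤ) - a.num * (p.den : ℤ)).natAbs = 1)
    (hb : (p.num * (b.den : ℤ) - b.num * (p.den : ℤ)).natAbs = 1) :
    (a.num * (b.den : ℤ) - b.num * (a.den : ℤ)).natAbs = 1 := by
  apply farey_key p.num (p.den : ℤ) a.num (a.den : ℤ) b.num (b.den : ℤ)
    (by have := a.pos; omega) (by have := b.pos; omega) hda hdb ?_ ha hb
  rintro ⟨h1, h2⟩
  exact hab (Rat.ext h1 (by omega))

/-- Lemma 3.5 (combinatorial content): a subgraph of the 1-skeleton of the Farey
tessellation containing at most one edge from the boundary of every 2-cell (ideal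
triangle) contains no embedded cycle, i.e. is a forest. -/
theorem stmt14 (H : SimpleGraph (Option ℚ)) (hle : H ≤ fareyGraph)
    (htri : ∀ u v w : Option ℚ,
      fareyGraph.Adj u v → fareyGraph.Adj v w → fareyGraph.Adj u w →
      ¬(H.Adj u v ∧ H.Adj v w)) :
    H.IsAcyclic := by
  classical
  intro x c hc
  have hxS : x ∈ c.support := c.start_mem_support
  obtain ⟨v0, hv0S, hv0max⟩ :=
    Finset.exists_max_image c.support.toFinset fareyDen ⟨x, List.mem_toFinset.mpr hxS⟩
  have hv0S' : v0 ∈ c.support := List.mem_toFinset.mp hv0S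
  have hmaxden : ∀ z ∈ c.support, fareyDen z ≤ fareyDen v0 := fun z hz =>
    hv0max z (List.mem_toFinset.mpr hz)
  rcases le_or_gt 2 (fareyDen v0) with hq | hq
  · -- big denominator case
    obtain ⟨u, w, huw, hau, haw, huS, hwS⟩ := farey_two_nbrs hc hv0S'
    rcases v0 with _ | p
    · exact absurd hq (by simp [fareyDen])
    have hp2 : 2 ≤ (p.den : ℤ) := by simpa [fareyDen] using hq
    have hnotinf : ∀ z : Option ℚ, H.Adj (some p) z → z ∈ c.support →
        ∃ s : ℚ, z = some s ∧ (s.den : ℤ) < (p.den : ℤ) ∧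
          (p.num * (s.den : ℤ) - s.num * (p.den : ℤ)).natAbs = 1 := by
      intro z hz hzS
      have hadj : fareyGraph.Adj (some p) z := hle hz
      rcases z with _ | s
      · exfalso
        have := hadj.2
        simp only [fareyNum, fareyDen] at this
        omega
      · have hnum := hadj.2
        simp only [fareyNum, fareyDen] at hnum
        have hle' : (s.den : ℤ) ≤ (p.den : ℤ) := by
          simpa [fareyDen] using hmaxden (some s) hzS
        refine ⟨s, rfl, ?_, hnum⟩
        rcases lt_or_eq_of_le hle' with h | h
        · exact h
        · exfalso
          have e : p.num * (s.den : ℤ) - s.num * (p.den : ℤ)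
              = (p.den : ℤ) * (p.num - s.num) := by rw [h]; ring
          rw [e, Int.natAbs_mul] at hnum
          have h2 := Nat.eq_one_of_mul_eq_one_right hnum
          omega
    obtain ⟨a, rfl, hda, hnuma⟩ := hnotinf u hau huS
    obtain ⟨b, rfl, hdb, hnumb⟩ := hnotinf w haw hwS
    have hab : a ≠ b := fun h => huw (by rw [h])
    have hadjab : fareyGraph.Adj (some a) (some b) := by
      refine ⟨huw, ?_⟩
      simp only [fareyNum, fareyDen]
      exact farey_parents_adj p a b hab hda hdb hnuma hnumb
    exact htri (some a) (some p) (some b) (hle hau).symm (hle haw) hadjab ⟨hau.symm, haw⟩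
  · -- small denominator case : all support vertices are ∞ or integers
    have hint : ∀ z ∈ c.support, ∀ s : ℚ, z = some s → s.den = 1 := by
      intro z hz s hzs
      subst hzs
      have h2 : fareyDen (some s) < 2 := lt_of_le_of_lt (hmaxden _ hz) hq
      simp only [fareyDen] at h2
      have h1 := s.pos
      omega
    have hTne : ∃ z ∈ c.support, fareyDen z = 1 := by
      obtain ⟨u, w, huw, hau, haw, huS, hwS⟩ := farey_two_nbrs hc hxS
      rcases u with _ | s
      · rcases w with _ | t
        · exact absurd rfl huw
        · exact ⟨some t, hwS, by simp [fareyDen, hint (some t) hwS t rfl]⟩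
      · exact ⟨some s, huS, by simp [fareyDen, hint (some s) huS s rfl]⟩
    obtain ⟨z0, hz0S, hz0den⟩ := hTne
    obtain ⟨v, hvS, hvmax⟩ :=
      Finset.exists_max_image ((c.support.toFinset).filter (fun z => fareyDen z = 1))
        fareyNum ⟨z0, Finset.mem_filter.mpr ⟨List.mem_toFinset.mpr hz0S, hz0den⟩⟩
    have hvS' : v ∈ c.support := List.mem_toFinset.mp (Finset.mem_filter.mp hvS).1
    have hvden : fareyDen v = 1 := (Finset.mem_filter.mp hvS).2
    have hvmax' : ∀ z ∈ c.support, fareyDen z = 1 → fareyNum z ≤ fareyNum v := by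
      intro z hz hzd
      exact hvmax z (Finset.mem_filter.mpr ⟨List.mem_toFinset.mpr hz, hzd⟩)
    rcases v with _ | r
    · exact absurd hvden (by simp [fareyDen])
    have hr1 : r.den = 1 := by
      simp only [fareyDen] at hvden
      exact_mod_cast hvden
    obtain ⟨u, w, huw, hau, haw, huS, hwS⟩ := farey_two_nbrs hc hvS'
    have hnbr : ∀ z : Option ℚ, H.Adj (some r) z → z ∈ c.support →
        z = none ∨ ∃ s : ℚ, z = some s ∧ s.den = 1 ∧ s.num = r.num - 1 := by
      intro z hz hzS
      have hadj : fareyGraph.Adj (some r) z := hle hz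
      rcases z with _ | s
      · exact Or.inl rfl
      · right
        have hs1 : s.den = 1 := hint (some s) hzS s rfl
        have hnum := hadj.2
        simp only [fareyNum, fareyDen, hr1, hs1] at hnum
        have hlek : s.num ≤ r.num := by
          simpa [fareyNum] using hvmax' (some s) hzS (by simp [fareyDen, hs1])
        have hsnum : s.num = r.num - 1 := by
          push_cast at hnum
          omega
        exact ⟨s, rfl, hs1, hsnum⟩
    have hinf_adj : ∀ s : ℚ, s.den = 1 → fareyGraph.Adj none (some s) := by
      intro s hs
      refine ⟨by simp, ?_⟩
      simp [fareyNum, fareyDen, hs]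
    rcases hnbr u hau huS with rfl | ⟨s, rfl, hs1, hsnum⟩
    · rcases hnbr w haw hwS with rfl | ⟨t, rfl, ht1, htnum⟩
      · exact huw rfl
      · exact htri none (some r) (some t) (hle hau).symm (hle haw)
          (hinf_adj t ht1) ⟨hau.symm, haw⟩
    · rcases hnbr w haw hwS with rfl | ⟨t, rfl, ht1, htnum⟩
      · exact htri (some s) (some r) none (hle hau).symm (hle haw)
          (hinf_adj s hs1).symm ⟨hau.symm, haw⟩
      · exact huw (by rw [Rat.ext (hsnum.trans htnum.symm) (hs1.trans ht1.symm)])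
end
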